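/- (Theorem 3(iv) for ker WB.) Let m, n ≥ 2 be integers and c = gcd(m+1, n+1) − 1 with c ≥ 1. Then the 𝔽₂-dimension of the polarized kernel ker WB of the m×n rectangular grid equals the 𝔽₂-dimension of the polarized kernel ker WB of the c×c rectangular grid. -/

import Mathlib

/-- Membership in the m×n rectangular grid {0,…,m−1}×{0,…,n−1}. -/
def InGrid (m n i j : ℤ) : Prop :=
  0 ≤ i ∧ i ≤ m - 1 ∧ 0 ≤ j ∧ j ≤ n - 1


instance (m n i j : ℤ) : Decidable (InGrid m n i j) :=
  inferInstanceAs (Decidable (_ ∧ _ ∧ _ ∧ _))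

/-- A function on ℤ×ℤ with values in ZMod 2, vanishing outside the m×n grid,
is harmonic if the sum of its values at the four neighbours of any grid point is 0. -/
def IsHarmonic (m n : ℤ) (v : ℤ → ℤ → ZMod 2) : Prop :=
  (∀ i j : ℤ, ¬ InGrid m n i j → v i j = 0) ∧
  (∀ i j : ℤ, InGrid m n i j →
    v (i - 1) j + v (i + 1) j + v i (j - 1) + v i (j + 1) = 0)

/-- The 𝔽₂-vector space of harmonic functions on the m×n grid. -/
def harm (m n : ℤ) : Submodule (ZMod 2) (ℤ → ℤ → ZMod 2) where
  carrier := {v | IsHarmonic m n v}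
  zero_mem' := ⟨fun _ _ _ => rfl, fun _ _ _ => by simp⟩
  add_mem' := by
    rintro a b ⟨ha0, ha1⟩ ⟨hb0, hb1⟩
    refine ⟨fun i j h => ?_, fun i j h => ?_⟩
    · simp [Pi.add_apply, ha0 i j h, hb0 i j h]
    · have h1 := ha1 i j h
      have h2 := hb1 i j h
      simp only [Pi.add_apply]
      linear_combination h1 + h2
  smul_mem' := by
    rintro c a ⟨ha0, ha1⟩
    refine ⟨fun i j h => ?_, fun i j h => ?_⟩
    · simp [Pi.smul_apply, ha0 i j h]
    · have h1 := ha1 i j h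
      simp only [Pi.smul_apply, smul_eq_mul]
      linear_combination c * h1

/-- Functions vanishing on a prescribed set of points. -/
def vanishOn (P : ℤ → ℤ → Prop) : Submodule (ZMod 2) (ℤ → ℤ → ZMod 2) where
  carrier := {v | ∀ i j : ℤ, P i j → v i j = 0}
  zero_mem' := fun _ _ _ => rfl
  add_mem' := by
    intro a b ha hb i j h
    simp [Pi.add_apply, ha i j h, hb i j h]
  smul_mem' := by
    intro c a ha i j h
    simp [Pi.smul_apply, ha i j h]

/-- The polarized kernel ker BW: harmonic functions vanishing at white points
(points with i+j odd). -/
def kerBW (m n : ℤ) : Submodule (ZMod 2) (ℤ → ℤ → ZMod 2) :=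
  harm m n ⊓ vanishOn (fun i j => Odd (i + j))

/-- The polarized kernel ker WB: harmonic functions vanishing at black points
(points with i+j even). -/
def kerWB (m n : ℤ) : Submodule (ZMod 2) (ℤ → ℤ → ZMod 2) :=
  harm m n ⊓ vanishOn (fun i j => Even (i + j))

/-!
Read column by column, a function vanishing off the `m × n` grid is harmonic iff its columns
satisfy `v_{j+1} = A v_j - v_{j-1}` for `0 ≤ j < n` (characteristic 2), where `A` is the adjacency operator of the path
`{0, …, m-1}`, so column `j` is `S_j(A) v_0` with `S_j` the Chebyshev polynomials normalised by
`S_{j+1} = X S_j - S_{j-1}`. Hence `ker WB` of the `m × n` grid is isomorphic to the space of first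
columns `x`, supported on the white cells, with `S_n(A) x = 0`.

The vector `e₀` is cyclic for `A` on functions supported on the path, with `S_k(A) e₀ = e_k`; this
gives `S_m(A) = 0` and `S_{m+1}(A) = -(reflection of the path)` there. So `S_{n+m+1}(A) x = 0` iff
`S_n(A) x = 0`, and the dimension is invariant under `n ↦ n + m + 1`. Together with the symmetry
`m ↔ n`, the subtractive Euclidean algorithm on `(m + 1, n + 1)` ends at the square of side
`gcd (m + 1) (n + 1) - 1`.
-/

open Polynomial Polynomial.Chebyshev Module

theorem Commute.aeval_left {R A : Type*} [CommSemiring R] [Semiring A] [Algebra R A] {a b : A}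
    (h : Commute a b) (p : R[X]) : Commute (aeval a p) b := by
  rw [aeval_eq_smeval]
  exact smeval_commute_left R p h

section Chebyshev

variable {R M : Type*} [CommRing R] [AddCommGroup M] [Module R M]

theorem eq_aeval_S_of_recurrence (A : Module.End R M) {w : ℤ → M} {n : ℤ} (hw : w (-1) = 0)
    (hrec : ∀ j, 0 ≤ j → j < n → w (j + 1) = A (w j) - w (j - 1)) {j : ℤ} (hj : 0 ≤ j)
    (hjn : j ≤ n) : w j = aeval A (S R j) (w 0) := by
  suffices ∀ j, 0 ≤ j → j ≤ n →
      w (j - 1) = aeval A (S R (j - 1)) (w 0) ∧ w j = aeval A (S R j) (w 0) from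
    (this j hj hjn).2
  intro j hj
  induction j, hj using Int.leInduction with
  | base => intro _; simp [hw]
  | succ j hj ih =>
    intro hjn
    obtain ⟨h₁, h₂⟩ := ih (by omega)
    refine ⟨by simpa using h₂, ?_⟩
    rw [hrec j hj (by omega), h₁, h₂, S_add_one]
    simp

theorem aeval_S_add_apply_of_commute {A T : Module.End R M} (hAT : Commute A T) {y : M} {p : ℤ}
    (h₀ : aeval A (S R p) y = 0) (h₁ : aeval A (S R (p + 1)) y = T y) {j : ℤ} (hj : 0 ≤ j) :
    aeval A (S R (j + p + 1)) y = T (aeval A (S R j) y) := by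
  have hrec (k : ℤ) : aeval A (S R (k + 1 + p + 1)) y =
      A (aeval A (S R (k + p + 1)) y) - aeval A (S R (k - 1 + p + 1)) y := by
    rw [show k + 1 + p + 1 = k + p + 1 + 1 by ring, show k - 1 + p + 1 = k + p + 1 - 1 by ring,
      S_add_one]
    simp
  rw [eq_aeval_S_of_recurrence A (w := fun k => aeval A (S R (k + p + 1)) y) (n := j)
    (by simpa using h₀) (fun k _ _ => hrec k) hj le_rfl]
  simp only [zero_add, h₁]
  exact LinearMap.congr_fun (hAT.aeval_left _).eq y

theorem apply_eq_of_mem_span_aeval {A f g : Module.End R M} (hf : Commute A f)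
    (hg : Commute A g) {y x : M} (hy : f y = g y)
    (hx : x ∈ Submodule.span R (Set.range fun p : R[X] => aeval A p y)) : f x = g x := by
  suffices Submodule.span R (Set.range fun p : R[X] => aeval A p y) ≤ LinearMap.ker (f - g) by
    simpa [sub_eq_zero] using this hx
  refine Submodule.span_le.2 (Set.range_subset_iff.2 fun p => ?_)
  rw [SetLike.mem_coe, LinearMap.mem_ker, ← Module.End.mul_apply,
    ← ((hf.sub_right hg).aeval_left p).eq, Module.End.mul_apply, LinearMap.sub_apply, hy,
    sub_self, map_zero]

end Chebyshev

section IndicatorSingle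

variable {ι M : Type*} [DecidableEq ι] [AddCommMonoid M] {s : Set ι} {l : ι}

theorem indicator_single_of_mem (hl : l ∈ s) (a : M) :
    s.indicator (Pi.single l a) = Pi.single l a :=
  Set.indicator_eq_self.2 (Pi.support_single_subset.trans (Set.singleton_subset_iff.2 hl))

theorem indicator_single_of_notMem (hl : l ∉ s) (a : M) : s.indicator (Pi.single l a) = 0 :=
  Set.indicator_eq_zero.2
    (Set.disjoint_of_subset_left Pi.support_single_subset (Set.disjoint_singleton_left.2 hl))

end IndicatorSingle

section PathGraph

variable {R : Type*} [CommRing R] (m : ℤ)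

noncomputable def pathAdj : Module.End R (ℤ → R) where
  toFun u := (Set.Ico 0 m).indicator fun i => u (i - 1) + u (i + 1)
  map_add' u v := by
    ext i
    simp only [Pi.add_apply, Set.indicator_apply]
    split_ifs
    · abel
    · simp
  map_smul' c u := by
    ext i
    simp only [Pi.smul_apply, Set.indicator_apply]
    split_ifs <;> simp [mul_add]

def pathFlip : Module.End R (ℤ → R) := LinearMap.funLeft R R fun i => m - 1 - i

variable {m}

theorem pathAdj_apply (u : ℤ → R) (i : ℤ) :
    pathAdj m u i = (Set.Ico 0 m).indicator (fun i => u (i - 1) + u (i + 1)) i := rfl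

theorem pathAdj_apply_of_notMem (u : ℤ → R) {i : ℤ} (hi : i ∉ Set.Ico 0 m) :
    pathAdj m u i = 0 := by
  rw [pathAdj_apply]
  exact Set.indicator_of_notMem hi _

theorem commute_pathAdj_pathFlip : Commute (pathAdj m) (pathFlip (R := R) m) := by
  ext u i
  simp only [Module.End.mul_apply, pathAdj_apply, pathFlip, LinearMap.funLeft_apply,
    Set.indicator_apply, Set.mem_Ico]
  rw [if_congr (by omega : 0 ≤ i ∧ i < m ↔ 0 ≤ m - 1 - i ∧ m - 1 - i < m) rfl rfl]
  split_ifs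
  · rw [add_comm]
    congr 2 <;> ring
  · rfl

theorem pathFlip_injective : Function.Injective (pathFlip (R := R) m) :=
  LinearMap.funLeft_injective_of_surjective R R _ fun i => ⟨m - 1 - i, by ring⟩

theorem pathAdj_single (k : ℤ) :
    pathAdj m (Pi.single k (1 : R)) =
      (Set.Ico 0 m).indicator (Pi.single (k - 1) 1 + Pi.single (k + 1) 1) := by
  ext i
  simp only [pathAdj_apply, Set.indicator_apply, Pi.add_apply, Pi.single_apply]
  split_ifs <;> first | rfl | (exfalso; omega) | simp

theorem aeval_S_pathAdj_single_zero (hm : 0 < m) {k : ℤ} (hk : 0 ≤ k) (hkm : k ≤ m) :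
    aeval (pathAdj m) (S R k) (Pi.single 0 (1 : R)) = (Set.Ico 0 m).indicator (Pi.single k 1) := by
  rw [← indicator_single_of_mem (show (0 : ℤ) ∈ Set.Ico 0 m from ⟨le_rfl, hm⟩)]
  refine (eq_aeval_S_of_recurrence (pathAdj m) (w := fun l => (Set.Ico 0 m).indicator
    (Pi.single l (1 : R))) (n := m) ?_ (fun l hl hlm => ?_) hk hkm).symm
  · exact indicator_single_of_notMem (by simp) _
  · rw [indicator_single_of_mem (show l ∈ Set.Ico 0 m from ⟨hl, hlm⟩), pathAdj_single,
      Set.indicator_add', add_sub_cancel_left]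

theorem aeval_S_pathAdj_single_zero_self (hm : 0 < m) :
    aeval (pathAdj m) (S R m) (Pi.single 0 (1 : R)) = 0 := by
  rw [aeval_S_pathAdj_single_zero hm hm.le le_rfl, indicator_single_of_notMem (by simp)]

theorem aeval_S_pathAdj_single_zero_self_add_one (hm : 0 < m) :
    aeval (pathAdj m) (S R (m + 1)) (Pi.single 0 (1 : R)) = -pathFlip m (Pi.single 0 1) := by
  have hflip : pathFlip m (Pi.single 0 (1 : R)) = Pi.single (m - 1) 1 := by
    ext i
    simp only [pathFlip, LinearMap.funLeft_apply, Pi.single_apply]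
    congr 1
    exact propext (by omega)
  simp only [S_add_one, map_sub, map_mul, aeval_X, LinearMap.sub_apply, Module.End.mul_apply]
  rw [aeval_S_pathAdj_single_zero_self hm, map_zero,
    aeval_S_pathAdj_single_zero hm (by omega) (by omega), indicator_single_of_mem (by simp; omega),
    hflip, zero_sub]

theorem mem_span_aeval_pathAdj_single_zero {x : ℤ → R} (hx : ∀ i ∉ Set.Ico 0 m, x i = 0) :
    x ∈ Submodule.span R (Set.range fun p : R[X] => aeval (pathAdj m) p (Pi.single 0 1)) := by
  have hsum : x = ∑ k ∈ Finset.Ico 0 m, x k • Pi.single k 1 := by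
    ext i
    simp only [Finset.sum_apply, Pi.smul_apply, Pi.single_apply, smul_eq_mul, mul_ite, mul_one,
      mul_zero, Finset.sum_ite_eq, Finset.mem_Ico]
    split_ifs with h
    · rfl
    · exact hx i (by simpa using h)
  rw [hsum]
  refine Submodule.sum_mem _ fun k hk => Submodule.smul_mem _ _ (Submodule.subset_span ⟨S R k, ?_⟩)
  rw [Finset.mem_Ico] at hk
  dsimp only
  rw [aeval_S_pathAdj_single_zero (by omega) hk.1 hk.2.le,
    indicator_single_of_mem (Set.mem_Ico.2 hk)]

theorem aeval_S_pathAdj_add_period (hm : 0 ≤ m) {x : ℤ → R} (hx : ∀ i ∉ Set.Ico 0 m, x i = 0)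
    {j : ℤ} (hj : 0 ≤ j) :
    aeval (pathAdj m) (S R (j + m + 1)) x = -pathFlip m (aeval (pathAdj m) (S R j) x) := by
  rcases hm.eq_or_lt with rfl | hm
  · obtain rfl : x = 0 := funext fun i => hx i (by simp)
    simp
  have hspan := mem_span_aeval_pathAdj_single_zero hx
  have hA {q : R[X]} : Commute (pathAdj m) (aeval (pathAdj (R := R) m) q) :=
    ((Commute.refl _).aeval_left q).symm
  have hflip : Commute (pathAdj m) (-pathFlip (R := R) m) :=
    (commute_pathAdj_pathFlip (R := R)).neg_right
  refine aeval_S_add_apply_of_commute hflip ?_ ?_ hj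
  · exact apply_eq_of_mem_span_aeval hA (Commute.zero_right _)
      (aeval_S_pathAdj_single_zero_self hm) hspan
  · exact apply_eq_of_mem_span_aeval hA hflip (aeval_S_pathAdj_single_zero_self_add_one hm) hspan

def whiteCells (m j : ℤ) : Set ℤ := {i | i ∈ Set.Ico 0 m ∧ Odd (i + j)}

theorem notMem_whiteCells_iff {i j : ℤ} :
    i ∉ whiteCells m j ↔ ¬ (0 ≤ i ∧ i < m ∧ (i + j) % 2 = 1) := by
  simp [whiteCells, Int.odd_iff, and_assoc]

theorem pathAdj_apply_eq_zero_of_notMem_whiteCells {j : ℤ} {u : ℤ → R}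
    (hu : ∀ i ∉ whiteCells m j, u i = 0) {i : ℤ} (hi : i ∉ whiteCells m (j + 1)) :
    pathAdj m u i = 0 := by
  by_cases hbox : i ∈ Set.Ico 0 m
  · rw [pathAdj_apply, Set.indicator_of_mem hbox, hu, hu, add_zero] <;>
      rw [Set.mem_Ico] at hbox <;> rw [notMem_whiteCells_iff] at hi ⊢ <;> omega
  · exact pathAdj_apply_of_notMem u hbox

theorem aeval_S_pathAdj_apply_eq_zero_of_notMem_whiteCells {x : ℤ → R}
    (hx : ∀ i ∉ whiteCells m 0, x i = 0) {j : ℤ} (hj : 0 ≤ j) :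
    ∀ i ∉ whiteCells m j, aeval (pathAdj m) (S R j) x i = 0 := by
  suffices ∀ j, 0 ≤ j →
      (∀ i ∉ whiteCells m (j - 1), aeval (pathAdj m) (S R (j - 1)) x i = 0) ∧
        ∀ i ∉ whiteCells m j, aeval (pathAdj m) (S R j) x i = 0 from
    (this j hj).2
  intro j hj
  induction j, hj using Int.leInduction with
  | base => simpa using hx
  | succ j _ ih =>
    refine ⟨by simpa using ih.2, fun i hi => ?_⟩
    simp only [S_add_one, map_sub, map_mul, aeval_X, LinearMap.sub_apply, Module.End.mul_apply,
      Pi.sub_apply]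
    rw [pathAdj_apply_eq_zero_of_notMem_whiteCells ih.2 hi, ih.1, sub_zero]
    rw [notMem_whiteCells_iff] at hi ⊢
    omega

end PathGraph

section Grid

variable {m n : ℤ}

theorem mem_kerWB {v : ℤ → ℤ → ZMod 2} :
    v ∈ kerWB m n ↔ IsHarmonic m n v ∧ ∀ i j, Even (i + j) → v i j = 0 := Submodule.mem_inf

theorem inGrid_iff {i j : ℤ} : InGrid m n i j ↔ i ∈ Set.Ico 0 m ∧ 0 ≤ j ∧ j < n := by
  simp only [InGrid, Set.mem_Ico]
  omega

theorem IsHarmonic.column_succ {v : ℤ → ℤ → ZMod 2} (hv : IsHarmonic m n v) {j : ℤ}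
    (hj : 0 ≤ j) (hjn : j < n) :
    (fun i => v i (j + 1)) = pathAdj m (fun i => v i j) - fun i => v i (j - 1) := by
  ext i
  by_cases hi : i ∈ Set.Ico 0 m
  · have h := hv.2 i j (inGrid_iff.2 ⟨hi, hj, hjn⟩)
    rw [Pi.sub_apply, pathAdj_apply, Set.indicator_of_mem hi]
    linear_combination h - (v (i - 1) j + v (i + 1) j) * CharTwo.two_eq_zero (R := ZMod 2)
  · rw [Pi.sub_apply, pathAdj_apply_of_notMem _ hi, hv.1 i _ (by simp [inGrid_iff, hi]),
      hv.1 i _ (by simp [inGrid_iff, hi]), sub_zero]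

theorem IsHarmonic.column_eq {v : ℤ → ℤ → ZMod 2} (hv : IsHarmonic m n v) {j : ℤ} (hj : 0 ≤ j)
    (hjn : j ≤ n) :
    (fun i => v i j) = aeval (pathAdj m) (S (ZMod 2) j) fun i => v i 0 :=
  eq_aeval_S_of_recurrence (pathAdj m) (w := fun j i => v i j)
    (funext fun i => hv.1 i (-1) (by simp [inGrid_iff])) (fun _ hj hjn => hv.column_succ hj hjn)
    hj hjn

noncomputable def firstCols (m n : ℤ) : Submodule (ZMod 2) (ℤ → ZMod 2) :=
  Submodule.pi (whiteCells m 0)ᶜ (fun _ => ⊥) ⊓ LinearMap.ker (aeval (pathAdj m) (S (ZMod 2) n))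

theorem mem_firstCols {x : ℤ → ZMod 2} :
    x ∈ firstCols m n ↔
      (∀ i ∉ whiteCells m 0, x i = 0) ∧ aeval (pathAdj m) (S (ZMod 2) n) x = 0 := by
  simp [firstCols, Submodule.mem_pi]

noncomputable def gridOfFirstCol (m n : ℤ) (x : ℤ → ZMod 2) : ℤ → ℤ → ZMod 2 :=
  fun i j => if 0 ≤ j ∧ j < n then aeval (pathAdj m) (S (ZMod 2) j) x i else 0

theorem gridOfFirstCol_apply {x : ℤ → ZMod 2} (hx : x ∈ firstCols m n) (i : ℤ) {j : ℤ}
    (hj : -1 ≤ j) (hjn : j ≤ n) :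
    gridOfFirstCol m n x i j = aeval (pathAdj m) (S (ZMod 2) j) x i := by
  unfold gridOfFirstCol
  split_ifs with h
  · rfl
  · obtain rfl | rfl : j = -1 ∨ j = n := by omega
    · simp
    · rw [(mem_firstCols.1 hx).2]
      rfl

theorem gridOfFirstCol_mem_kerWB {x : ℤ → ZMod 2} (hx : x ∈ firstCols m n) :
    gridOfFirstCol m n x ∈ kerWB m n := by
  have hwhite {i j : ℤ} (hij : i ∉ whiteCells m j) : gridOfFirstCol m n x i j = 0 := by
    unfold gridOfFirstCol
    split_ifs with hj
    · exact aeval_S_pathAdj_apply_eq_zero_of_notMem_whiteCells (mem_firstCols.1 hx).1 hj.1 i hij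
    · rfl
  refine mem_kerWB.2 ⟨⟨fun i j hij => ?_, fun i j hij => ?_⟩, fun i j hij => ?_⟩
  · by_cases hj : 0 ≤ j ∧ j < n
    · exact hwhite fun h => hij (inGrid_iff.2 ⟨h.1, hj⟩)
    · exact if_neg hj
  · obtain ⟨hi, hj, hjn⟩ := inGrid_iff.1 hij
    set u := fun k => aeval (pathAdj m) (S (ZMod 2) k) x
    have hrec : u (j + 1) i = pathAdj m (u j) i - u (j - 1) i := by simp [u, S_add_one]
    rw [pathAdj_apply, Set.indicator_of_mem hi] at hrec
    simp (disch := omega) only [gridOfFirstCol_apply hx]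
    linear_combination hrec + (u j (i - 1) + u j (i + 1)) * CharTwo.two_eq_zero (R := ZMod 2)
  · exact hwhite fun h => Int.not_odd_iff_even.2 hij h.2

def firstCol : (ℤ → ℤ → ZMod 2) →ₗ[ZMod 2] ℤ → ZMod 2 := (LinearMap.proj 0).compLeft ℤ

theorem firstCol_apply (v : ℤ → ℤ → ZMod 2) (i : ℤ) : firstCol v i = v i 0 := rfl

theorem map_firstCol_kerWB (hn : 0 ≤ n) : (kerWB m n).map firstCol = firstCols m n := by
  ext x
  constructor
  · rintro ⟨v, hv, rfl⟩
    obtain ⟨hharm, hblack⟩ := mem_kerWB.1 hv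
    refine mem_firstCols.2 ⟨fun i hi => ?_, ?_⟩
    · by_cases hgrid : InGrid m n i 0
      · exact hblack i 0 (Int.not_odd_iff_even.1 fun h => hi ⟨(inGrid_iff.1 hgrid).1, h⟩)
      · exact hharm.1 i 0 hgrid
    · change aeval (pathAdj m) (S (ZMod 2) n) (fun i => v i 0) = 0
      rw [← hharm.column_eq hn le_rfl]
      exact funext fun i => hharm.1 i n (by simp [inGrid_iff])
  · intro hx
    refine ⟨gridOfFirstCol m n x, gridOfFirstCol_mem_kerWB hx, funext fun i => ?_⟩
    rw [firstCol_apply, gridOfFirstCol_apply hx i (by omega) hn]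
    simp

theorem injective_firstCol_domRestrict_kerWB :
    Function.Injective (firstCol.domRestrict (kerWB m n)) := by
  refine (injective_iff_map_eq_zero _).2 fun v hv => Subtype.ext (funext₂ fun i j => ?_)
  have hharm := (mem_kerWB.1 v.2).1
  by_cases hij : InGrid m n i j
  · obtain ⟨-, hj, hjn⟩ := inGrid_iff.1 hij
    have hv : firstCol v.1 = 0 := hv
    have hcol := congrFun (hharm.column_eq hj hjn.le) i
    simp only [← firstCol_apply, hv, map_zero] at hcol
    exact hcol
  · exact hharm.1 i j hij

theorem finrank_kerWB_eq_finrank_firstCols (hn : 0 ≤ n) :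
    finrank (ZMod 2) (kerWB m n) = finrank (ZMod 2) (firstCols m n) := by
  rw [← LinearMap.finrank_range_of_inj injective_firstCol_domRestrict_kerWB,
    LinearMap.range_domRestrict, map_firstCol_kerWB hn]

theorem firstCols_add_period (hm : 0 ≤ m) (hn : 0 ≤ n) :
    firstCols m (n + m + 1) = firstCols m n := by
  ext x
  simp only [mem_firstCols, and_congr_right_iff]
  intro hx
  have hbox : ∀ i ∉ Set.Ico 0 m, x i = 0 := fun i hi => hx i fun h => hi h.1
  rw [aeval_S_pathAdj_add_period hm hbox hn, neg_eq_zero, map_eq_zero_iff _ pathFlip_injective]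

theorem finrank_kerWB_add_period (hm : 0 ≤ m) (hn : 0 ≤ n) :
    finrank (ZMod 2) (kerWB m (n + m + 1)) = finrank (ZMod 2) (kerWB m n) := by
  rw [finrank_kerWB_eq_finrank_firstCols (by omega), finrank_kerWB_eq_finrank_firstCols hn,
    firstCols_add_period hm hn]

theorem transpose_mem_kerWB {v : ℤ → ℤ → ZMod 2} (hv : v ∈ kerWB m n) :
    (fun i j => v j i) ∈ kerWB n m := by
  obtain ⟨⟨hout, hsum⟩, hblack⟩ := mem_kerWB.1 hv
  have hswap {i j : ℤ} : InGrid n m i j ↔ InGrid m n j i := by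
    simp only [InGrid]
    tauto
  refine mem_kerWB.2 ⟨⟨fun i j hij => hout j i (hswap.not.1 hij), fun i j hij => ?_⟩,
    fun i j hij => hblack j i (by rwa [add_comm])⟩
  linear_combination hsum j i (hswap.1 hij)

variable (m n) in
def kerWBTranspose : kerWB m n ≃ₗ[ZMod 2] kerWB n m where
  toFun v := ⟨fun i j => v.1 j i, transpose_mem_kerWB v.2⟩
  invFun v := ⟨fun i j => v.1 j i, transpose_mem_kerWB v.2⟩
  map_add' _ _ := rfl
  map_smul' _ _ := rfl
  left_inv _ := rfl
  right_inv _ := rfl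

end Grid

theorem Nat.apply_eq_apply_gcd_gcd {α : Type*} {K : ℕ → ℕ → α} (hcomm : ∀ a b, K a b = K b a)
    (hadd : ∀ a b, 0 < a → 0 < b → K a (b + a) = K a b) {a b : ℕ} (ha : 0 < a) (hb : 0 < b) :
    K a b = K (a.gcd b) (a.gcd b) := by
  induction hs : a + b using Nat.strong_induction_on generalizing a b with
  | _ s ih =>
    wlog hab : a ≤ b generalizing a b
    · rw [hcomm, Nat.gcd_comm]
      exact this hb ha (by omega) (by omega)
    obtain ⟨d, rfl⟩ := Nat.exists_eq_add_of_le' hab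
    rcases d.eq_zero_or_pos with rfl | hd
    · rw [zero_add, Nat.gcd_self]
    · rw [hadd a d ha hd, Nat.gcd_add_self_right]
      exact ih (a + d) (by omega) ha hd rfl

theorem kerWB_dim_eq_square_general (m n : ℤ) (hm : 2 ≤ m) (hn : 2 ≤ n)
    (c : ℕ) (hc : c = Int.gcd (m + 1) (n + 1) - 1) :
    Module.finrank (ZMod 2) (kerWB m n) =
      Module.finrank (ZMod 2) (kerWB (c : ℤ) (c : ℤ)) := by
  have key := Nat.apply_eq_apply_gcd_gcd
    (K := fun a b : ℕ => finrank (ZMod 2) (kerWB ((a : ℤ) - 1) ((b : ℤ) - 1)))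
    (fun a b => (kerWBTranspose _ _).finrank_eq)
    (fun a b ha hb => by
      rw [show ((b + a : ℕ) : ℤ) - 1 = b - 1 + (a - 1) + 1 by push_cast; ring]
      exact finrank_kerWB_add_period (by omega) (by omega))
    (a := (m + 1).natAbs) (b := (n + 1).natAbs) (by omega) (by omega)
  have hg : 0 < Int.gcd (m + 1) (n + 1) := Int.gcd_pos_of_ne_zero_left _ (by omega)
  have hc' : (Int.gcd (m + 1) (n + 1) : ℤ) - 1 = c := by omega
  rw [show ((m + 1).natAbs : ℤ) - 1 = m by omega, show ((n + 1).natAbs : ℤ) - 1 = n by omega] at key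
  rw [key, ← hc']
  rfl

/-- Theorem 3(iv) for ker WB: dim ker WB of the m×n grid equals
dim ker WB of the c×c grid. -/
theorem kerWB_dim_eq_square (m n : ℤ) (hm : 2 ≤ m) (hn : 2 ≤ n)
    (c : ℕ) (hc : c = Int.gcd (m + 1) (n + 1) - 1) (hc1 : 1 ≤ c) :
    Module.finrank (ZMod 2) (kerWB m n) =
      Module.finrank (ZMod 2) (kerWB (c : ℤ) (c : ℤ)) :=
  kerWB_dim_eq_square_general m n hm hn c hc
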